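/- arXiv:math/0206116 — 2 statements merged into one kernel-verified Lean document; each statement's English description precedes it below -/
import Mathlib

section
/- Let R be a commutative ring, J an ideal of R such that the quotient ring R/J is Artinian, and M an R-module with J • M = 0. Then: (a) the set S of maximal ideals of R containing J is finite; (b) for every maximal ideal 𝔪 of R not containing J, the localization M_𝔪 of M at 𝔪 is zero; and (c) the canonical map M → ∏_{𝔪 ∈ S} M_𝔪, given in each coordinate by the localization map, is bijective. -/
/-!
Since `R ⧸ J` is Artinian, only finitely many maximal ideals `𝔪₁, …, 𝔪ₖ` contain `J`, and a power
of their intersection, the Jacobson radical of `J`, lies in `J`; hence `∏ 𝔪ᵢ ^ n` kills `M`.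
The factors other than `𝔪ᵢ ^ n` contain a unit of `R_{𝔪ᵢ}`, so `𝔪ᵢ ^ n` kills `M_{𝔪ᵢ}`; as every
`s ∉ 𝔪ᵢ` is invertible modulo `𝔪ᵢ ^ n`, the map `M → M_{𝔪ᵢ}` is onto, and Chinese-remainder
elements `eᵢ ≡ δᵢⱼ mod 𝔪ⱼ ^ n` glue preimages into a preimage of any family. Injectivity is a local
question, and at every other maximal ideal the localization of `M` vanishes.
-/

namespace Ideal

theorem exists_eq_of_prod_pow_le {R ι : Type*} [CommSemiring R] {s : Finset ι}
    {𝔪 : ι → Ideal R} [∀ i, (𝔪 i).IsMaximal] {P : Ideal R} [hP : P.IsPrime] {n : ℕ}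
    (h : ∏ i ∈ s, 𝔪 i ^ n ≤ P) : ∃ i ∈ s, 𝔪 i = P := by
  obtain ⟨i, hi, hle⟩ := hP.prod_le.mp h
  exact ⟨i, hi, IsMaximal.eq_of_le inferInstance hP.ne_top (IsPrime.le_of_pow_le hle)⟩

variable {R : Type*} [CommRing R] (J : Ideal R) [IsArtinianRing (R ⧸ J)]

theorem finite_setOf_isMaximal_le : {𝔪 : Ideal R | 𝔪.IsMaximal ∧ J ≤ 𝔪}.Finite := by
  refine ((IsArtinianRing.setOfPred_isMaximal_finite (R ⧸ J)).image
    (comap (Quotient.mk J))).subset ?_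
  rintro 𝔪 ⟨h𝔪, hJ⟩
  refine ⟨𝔪.map (Quotient.mk J),
    h𝔪.map_of_surjective_of_ker_le Quotient.mk_surjective (mk_ker.trans_le hJ), ?_⟩
  rw [comap_map_of_surjective' _ Quotient.mk_surjective, mk_ker, sup_eq_left.mpr hJ]

theorem exists_jacobson_pow_le : ∃ n : ℕ, J.jacobson ^ n ≤ J := by
  obtain ⟨n, hn⟩ := IsArtinianRing.isNilpotent_jacobson_bot (R := R ⧸ J)
  refine ⟨n, ?_⟩
  suffices (J.jacobson ^ n).map (Quotient.mk J) = ⊥ by rwa [map_eq_bot_iff_le_ker, mk_ker] at this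
  rw [Ideal.map_pow, map_jacobson_of_surjective Quotient.mk_surjective mk_ker.le,
    map_quotient_self, hn, zero_eq_bot]

end Ideal

namespace LocalizedModule

section CommSemiring

variable {R : Type*} [CommSemiring R] {M : Type*} [AddCommMonoid M] [Module R M]

theorem le_annihilator_of_mul_le_annihilator {𝔞 𝔟 p : Ideal R} [p.IsPrime]
    (h : 𝔞 * 𝔟 ≤ Module.annihilator R M) (hp : ¬ 𝔟 ≤ p) :
    𝔞 ≤ Module.annihilator R (LocalizedModule p.primeCompl M) := by
  obtain ⟨u, hu𝔟, hup⟩ := SetLike.not_le_iff_exists.mp hp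
  intro r hr
  rw [Module.mem_annihilator]
  intro x
  induction x using induction_on with
  | h m s =>
    have hrum : (r * u) • m = 0 := Module.mem_annihilator.mp (h (Ideal.mul_mem_mul hr hu𝔟)) m
    rw [smul'_mk, ← zero_mk s, mk_eq]
    refine ⟨⟨u, hup⟩, ?_⟩
    show u • (s : R) • r • m = u • (s : R) • (0 : M)
    rw [smul_zero, smul_zero, smul_smul, smul_smul, show u * s * r = s * (r * u) by ring,
      mul_smul, hrum, smul_zero]

theorem mkLinearMap_surjective_of_pow_le_annihilator {𝔪 : Ideal R} [h𝔪 : 𝔪.IsMaximal] {n : ℕ}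
    (h : 𝔪 ^ n ≤ Module.annihilator R (LocalizedModule 𝔪.primeCompl M)) :
    Function.Surjective (mkLinearMap 𝔪.primeCompl M) := by
  intro x
  induction x using induction_on with
  | h m s =>
    have hcop : IsCoprime (Ideal.span {(s : R)}) (𝔪 ^ n) := by
      obtain ⟨y, i, hi, hyi⟩ := h𝔪.exists_inv s.2
      exact IsCoprime.pow_right (Ideal.isCoprime_iff_exists.mpr
        ⟨y * s, Ideal.mem_span_singleton'.mpr ⟨y, rfl⟩, i, hi, hyi⟩)
    obtain ⟨a, ha, b, hb, hab⟩ := Ideal.isCoprime_iff_exists.mp hcop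
    obtain ⟨t, rfl⟩ := Ideal.mem_span_singleton'.mp ha
    refine ⟨t • m, ?_⟩
    calc mkLinearMap 𝔪.primeCompl M (t • m) = (t * s) • mk m s := by
          rw [mkLinearMap_apply, ← mk_cancel s (t • m), smul'_mk, smul_comm, mul_smul]; rfl
      _ = (t * s + b) • mk m s := by
          rw [add_smul, Module.mem_annihilator.mp (h hb), add_zero]
      _ = mk m s := by rw [hab, one_smul]

end CommSemiring

variable {R : Type*} [CommRing R] {M : Type*} [AddCommGroup M] [Module R M]

theorem subsingleton_of_le_annihilator {𝔟 p : Ideal R} [p.IsPrime]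
    (h : 𝔟 ≤ Module.annihilator R M) (hp : ¬ 𝔟 ≤ p) :
    Subsingleton (LocalizedModule p.primeCompl M) := by
  obtain ⟨u, hu𝔟, hup⟩ := SetLike.not_le_iff_exists.mp hp
  exact subsingleton_iff.mpr fun m ↦ ⟨u, hup, Module.mem_annihilator.mp (h hu𝔟) m⟩

section Pi

open Finset

variable {ι : Type*} [Fintype ι] {𝔪 : ι → Ideal R} [∀ i, (𝔪 i).IsMaximal] {n : ℕ}

theorem pow_le_annihilator_of_prod_pow_le_annihilator (h𝔪 : Function.Injective 𝔪)
    (hM : ∏ i, 𝔪 i ^ n ≤ Module.annihilator R M) (j : ι) :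
    𝔪 j ^ n ≤ Module.annihilator R (LocalizedModule (𝔪 j).primeCompl M) := by
  classical
  refine le_annihilator_of_mul_le_annihilator (𝔟 := ∏ i ∈ univ.erase j, 𝔪 i ^ n) ?_
    fun hle ↦ ?_
  · rwa [mul_comm, prod_erase_mul _ _ (mem_univ j)]
  · obtain ⟨i, hi, hij⟩ := Ideal.exists_eq_of_prod_pow_le hle
    exact (mem_erase.mp hi).1 (h𝔪 hij)

theorem bijective_pi_mkLinearMap_of_prod_pow_le_annihilator (h𝔪 : Function.Injective 𝔪)
    (hM : ∏ i, 𝔪 i ^ n ≤ Module.annihilator R M) :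
    Function.Bijective (LinearMap.pi fun i ↦ mkLinearMap (𝔪 i).primeCompl M) := by
  classical
  have hloc := pow_le_annihilator_of_prod_pow_le_annihilator h𝔪 hM
  constructor
  · rw [injective_iff_map_eq_zero]
    intro m hm
    refine Module.eq_zero_of_localization_maximal
      (fun (P : Ideal R) _ ↦ LocalizedModule P.primeCompl M) (fun P _ ↦ mkLinearMap P.primeCompl M)
      m fun P _ ↦ ?_
    by_cases hP : ∃ i, 𝔪 i = P
    · obtain ⟨i, rfl⟩ := hP
      exact congrFun hm i
    · have := subsingleton_of_le_annihilator hM fun hle ↦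
        hP (Exists.imp (fun _ ↦ And.right) (Ideal.exists_eq_of_prod_pow_le hle))
      exact Subsingleton.elim _ _
  · intro y
    choose m hm using fun i ↦ mkLinearMap_surjective_of_pow_le_annihilator (hloc i) (y i)
    have hcop : Pairwise fun i j ↦ IsCoprime (𝔪 i ^ n) (𝔪 j ^ n) := fun i j hij ↦
      (Ideal.isCoprime_iff_sup_eq.mpr (Ideal.IsMaximal.coprime_of_ne inferInstance inferInstance
        (h𝔪.ne hij))).pow
    choose e he using fun i ↦ Ideal.exists_forall_sub_mem_ideal hcop (Pi.single i 1)
    refine ⟨∑ i, e i • m i, funext fun j ↦ ?_⟩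
    rw [LinearMap.pi_apply, map_sum, sum_eq_single j]
    · rw [map_smul, hm j]
      have hej := Module.mem_annihilator.mp (hloc j (he j j)) (y j)
      rwa [Pi.single_eq_same, sub_smul, one_smul, sub_eq_zero] at hej
    · intro i _ hij
      have hei := he i j
      rw [Pi.single_eq_of_ne hij.symm, sub_zero] at hei
      rw [map_smul]
      exact Module.mem_annihilator.mp (hloc j hei) _
    · exact fun hj ↦ absurd (mem_univ j) hj

end Pi

end LocalizedModule

/-- **Decomposition of a module killed by an ideal with Artinian quotient.**
Let `R` be a commutative ring, `J ⊆ R` an ideal with `R/J` Artinian, and `M` an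
`R`-module with `J • M = 0`.  Then: (a) the set of maximal ideals of `R` containing `J`
is finite; (b) the localization of `M` at any maximal ideal not containing `J`
vanishes; and (c) the canonical map from `M` to the product of its localizations at the
maximal ideals containing `J` is bijective. -/
theorem module_killed_by_ideal_decomposition
    {R : Type*} [CommRing R] (J : Ideal R) (hArt : IsArtinianRing (R ⧸ J))
    (M : Type*) [AddCommGroup M] [Module R M]
    (hJM : ∀ r ∈ J, ∀ m : M, r • m = 0) :
    {𝔪 : Ideal R | 𝔪.IsMaximal ∧ J ≤ 𝔪}.Finite ∧
    (∀ (𝔪 : Ideal R) (h𝔪 : 𝔪.IsMaximal), ¬ J ≤ 𝔪 →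
      haveI := h𝔪.isPrime
      ∀ x : LocalizedModule 𝔪.primeCompl M, x = 0) ∧
    Function.Bijective
      (fun (m : M) (𝔪 : {𝔪 : Ideal R // 𝔪.IsMaximal ∧ J ≤ 𝔪}) =>
        haveI := 𝔪.2.1.isPrime
        LocalizedModule.mkLinearMap 𝔪.1.primeCompl M m) := by
  have hJ : J ≤ Module.annihilator R M := fun r hr ↦ Module.mem_annihilator.mpr (hJM r hr)
  have hfin := J.finite_setOf_isMaximal_le
  refine ⟨hfin, fun 𝔪 h𝔪 h𝔪J x ↦
    (LocalizedModule.subsingleton_of_le_annihilator hJ h𝔪J).elim x 0, ?_⟩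
  have : Fintype {𝔪 : Ideal R // 𝔪.IsMaximal ∧ J ≤ 𝔪} := hfin.fintype
  have (𝔪 : {𝔪 : Ideal R // 𝔪.IsMaximal ∧ J ≤ 𝔪}) : 𝔪.1.IsMaximal := 𝔪.2.1
  obtain ⟨n, hn⟩ := J.exists_jacobson_pow_le
  refine LocalizedModule.bijective_pi_mkLinearMap_of_prod_pow_le_annihilator
    Subtype.val_injective (n := n) ?_
  calc ∏ 𝔪 : {𝔪 : Ideal R // 𝔪.IsMaximal ∧ J ≤ 𝔪}, 𝔪.1 ^ n
      = (∏ 𝔪 : {𝔪 : Ideal R // 𝔪.IsMaximal ∧ J ≤ 𝔪}, 𝔪.1) ^ n := Finset.prod_pow _ _ _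
    _ ≤ J.jacobson ^ n := Ideal.pow_right_mono (le_sInf fun 𝔪 h ↦ Ideal.prod_le_inf.trans
        (Finset.inf_le (f := Subtype.val) (Finset.mem_univ ⟨𝔪, h.2, h.1⟩))) n
    _ ≤ J := hn
    _ ≤ Module.annihilator R M := hJ
end

section
/- Let R be a commutative Artinian ring and 𝔪 a maximal ideal of R. Then there exists a natural number k with 𝔪^k = 𝔪^(k+1); and for any such k and any R-module M, the canonical localization map M → M_𝔪 is surjective with kernel equal to 𝔪^k • M. In particular the induced map M/(𝔪^k • M) → M_𝔪 is an isomorphism. -/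
/-!
The kernel of `R → R_𝔪` lies in every power `𝔪 ^ k`, because an element `s ∉ 𝔪` is invertible
modulo `𝔪 ^ k`. Conversely, `R_𝔪` is an Artinian local ring, so its maximal ideal `𝔪 R_𝔪` is
nilpotent; hence once the powers of `𝔪` have stabilised, `𝔪 ^ k` maps to zero. Thus
`R_𝔪 = R ⧸ 𝔪 ^ k` as a quotient of `R`. For any localization `R → S⁻¹R` that is surjective with
kernel `J`, every `m / s` is of the form `c • m / 1`, and `M → S⁻¹M` has kernel `J • M`.
-/

namespace LocalizedModule

variable {R : Type*} [CommRing R] {S : Submonoid R} {L : Type*} [CommRing L] [Algebra R L]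
  [IsLocalization S L]

theorem exists_mul_sub_one_mem_ker_algebraMap (hL : Function.Surjective (algebraMap R L))
    (s : S) : ∃ c : R, c * s - 1 ∈ RingHom.ker (algebraMap R L) := by
  obtain ⟨c, hc⟩ := hL (IsLocalization.mk' L 1 s)
  refine ⟨c, ?_⟩
  rw [RingHom.mem_ker, map_sub, map_mul, hc, IsLocalization.mk'_spec, map_one, sub_self]

variable (M : Type*) [AddCommGroup M] [Module R M]

theorem mkLinearMap_surjective_of_surjective_algebraMap
    (hL : Function.Surjective (algebraMap R L)) : Function.Surjective (mkLinearMap S M) := by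
  intro x
  induction x using induction_on with
  | h m s =>
    obtain ⟨c, hc⟩ := exists_mul_sub_one_mem_ker_algebraMap hL s
    obtain ⟨u, hu⟩ := (IsLocalization.map_eq_zero_iff S L _).mp hc
    refine ⟨c • m, mk_eq.mpr ⟨u, ?_⟩⟩
    simp only [Submonoid.smul_def, one_smul, smul_smul]
    rw [← sub_eq_zero, ← sub_smul, show (u : R) * (s * c) - u = u * (c * s - 1) by ring, hu,
      zero_smul]

theorem ker_mkLinearMap_eq_ker_algebraMap_smul_top
    (hL : Function.Surjective (algebraMap R L)) :
    LinearMap.ker (mkLinearMap S M) = RingHom.ker (algebraMap R L) • (⊤ : Submodule R M) := by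
  apply le_antisymm
  · intro m hm
    obtain ⟨s, hs, hsm⟩ := mem_ker_mkLinearMap_iff.mp hm
    obtain ⟨c, hc⟩ := exists_mul_sub_one_mem_ker_algebraMap hL ⟨s, hs⟩
    have : m = -(c * s - 1) • m + c • s • m := by
      rw [smul_smul, ← add_smul, show -(c * s - 1) + c * s = 1 by ring, one_smul]
    rw [this, hsm, smul_zero, add_zero]
    exact Submodule.smul_mem_smul (neg_mem hc) trivial
  · refine Submodule.smul_le.mpr fun a ha m _ => mem_ker_mkLinearMap_iff.mpr ?_
    obtain ⟨u, hu⟩ := (IsLocalization.map_eq_zero_iff S L a).mp ha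
    exact ⟨u, u.2, by rw [smul_smul, hu, zero_smul]⟩

end LocalizedModule

namespace Ideal

variable {R : Type*} [CommRing R] (𝔪 : Ideal R) [𝔪.IsMaximal]

theorem ker_algebraMap_atPrime_le_pow (k : ℕ) :
    RingHom.ker (algebraMap R (Localization.AtPrime 𝔪)) ≤ 𝔪 ^ k := by
  intro a ha
  obtain ⟨⟨s, hs⟩, hsa⟩ := (IsLocalization.map_eq_zero_iff 𝔪.primeCompl _ a).mp ha
  have hcop : span {s} ⊔ 𝔪 ^ k = ⊤ := by
    refine sup_pow_eq_top ((eq_top_iff_one _).mpr ?_)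
    exact mem_span_singleton_sup.mpr (‹𝔪.IsMaximal›.exists_inv hs)
  obtain ⟨x, y, hy, hxy⟩ := mem_span_singleton_sup.mp ((eq_top_iff_one _).mp hcop)
  have : a = x * (s * a) + a * y := by linear_combination (-a) * hxy
  rw [this, hsa, mul_zero, zero_add]
  exact mul_mem_left _ a hy

end Ideal

theorem pow_eq_of_pow_eq_pow_succ {M : Type*} [Monoid M] {a : M} {k : ℕ}
    (h : a ^ k = a ^ (k + 1)) (n : ℕ) : a ^ (k + n) = a ^ k := by
  induction n with
  | zero => rfl
  | succ n ih => rw [← add_assoc, pow_succ, ih, ← pow_succ, ← h]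

namespace IsArtinianRing

variable {R : Type*} [CommRing R] [IsArtinianRing R]

theorem exists_pow_eq_pow_succ (I : Ideal R) : ∃ k : ℕ, I ^ k = I ^ (k + 1) := by
  obtain ⟨k, hk⟩ := IsArtinian.monotone_stabilizes ⟨(I ^ ·), fun _ _ => Ideal.pow_le_pow_right⟩
  exact ⟨k, hk (k + 1) k.le_succ⟩

variable (𝔪 : Ideal R) [𝔪.IsMaximal]

theorem pow_le_ker_algebraMap_atPrime {k : ℕ} (h : 𝔪 ^ k = 𝔪 ^ (k + 1)) :
    𝔪 ^ k ≤ RingHom.ker (algebraMap R (Localization.AtPrime 𝔪)) := by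
  obtain ⟨n, hn⟩ := isNilpotent_jacobson_bot (R := Localization.AtPrime 𝔪)
  have hmap : (𝔪 ^ n).map (algebraMap R (Localization.AtPrime 𝔪)) = ⊥ := by
    rw [Ideal.map_pow, Localization.AtPrime.map_eq_maximalIdeal, ← le_bot_iff, ← Ideal.zero_eq_bot,
      ← hn]
    exact Ideal.pow_right_mono (IsLocalRing.maximalIdeal_le_jacobson ⊥) n
  rw [RingHom.ker_eq_comap_bot, ← Ideal.map_le_iff_le_comap, ← pow_eq_of_pow_eq_pow_succ h n]
  exact hmap ▸ Ideal.map_mono (Ideal.pow_le_pow_right (Nat.le_add_left n k))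

theorem ker_algebraMap_atPrime_eq_pow {k : ℕ} (h : 𝔪 ^ k = 𝔪 ^ (k + 1)) :
    RingHom.ker (algebraMap R (Localization.AtPrime 𝔪)) = 𝔪 ^ k :=
  le_antisymm (Ideal.ker_algebraMap_atPrime_le_pow 𝔪 k) (pow_le_ker_algebraMap_atPrime 𝔪 h)

end IsArtinianRing

/-- **Localization at a maximal ideal of an Artinian ring.**
Let `R` be a commutative Artinian ring and `𝔪` a maximal ideal of `R`.  Then there is a
natural number `k` with `𝔪^k = 𝔪^(k+1)`, and for any such `k` and any `R`-module `M`,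
the canonical map `M → M_𝔪` is surjective with kernel `𝔪^k • M`; in particular the
induced map `M/(𝔪^k • M) → M_𝔪` is an isomorphism. -/
theorem localization_at_maximal_ideal_of_artinian
    {R : Type*} [CommRing R] [IsArtinianRing R] (𝔪 : Ideal R) [𝔪.IsMaximal]
    (M : Type*) [AddCommGroup M] [Module R M] :
    (∃ k : ℕ, 𝔪 ^ k = 𝔪 ^ (k + 1)) ∧
    ∀ k : ℕ, 𝔪 ^ k = 𝔪 ^ (k + 1) →
      Function.Surjective (LocalizedModule.mkLinearMap 𝔪.primeCompl M) ∧
      LinearMap.ker (LocalizedModule.mkLinearMap 𝔪.primeCompl M)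
        = 𝔪 ^ k • (⊤ : Submodule R M) ∧
      ∃ e : (M ⧸ (𝔪 ^ k • (⊤ : Submodule R M))) ≃ₗ[R] LocalizedModule 𝔪.primeCompl M,
        ∀ m : M, e (Submodule.Quotient.mk m) = LocalizedModule.mkLinearMap 𝔪.primeCompl M m := by
  refine ⟨IsArtinianRing.exists_pow_eq_pow_succ 𝔪, fun k hk => ?_⟩
  have hL := IsArtinianRing.localization_surjective 𝔪.primeCompl (Localization.AtPrime 𝔪)
  have hsurj :=
    LocalizedModule.mkLinearMap_surjective_of_surjective_algebraMap (S := 𝔪.primeCompl) M hL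
  have hker : LinearMap.ker (LocalizedModule.mkLinearMap 𝔪.primeCompl M) =
      𝔪 ^ k • (⊤ : Submodule R M) := by
    rw [LocalizedModule.ker_mkLinearMap_eq_ker_algebraMap_smul_top M hL,
      IsArtinianRing.ker_algebraMap_atPrime_eq_pow 𝔪 hk]
  refine ⟨hsurj, hker, (Submodule.quotEquivOfEq _ _ hker.symm).trans
    ((LocalizedModule.mkLinearMap 𝔪.primeCompl M).quotKerEquivOfSurjective hsurj), fun _ => rfl⟩
end
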